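/- Let f and g be nonconstant meromorphic functions on ℂ, let k and n be positive integers with n>2k, and let α be a nonzero meromorphic function such that (fⁿ)^{(k)}·(gⁿ)^{(k)} ≡ α² on ℂ. Suppose z₀∈ℂ is a zero of f of multiplicity p₀ and a pole of g of multiplicity s₀. Then np₀−k ≠ ns₀+k, and: (i) if np₀−k > ns₀+k, then z₀ is a zero of α of multiplicity (n(p₀−s₀)−2k)/2; (ii) if np₀−k < ns₀+k, then p₀ ≤ s₀ and z₀ is a pole of α of multiplicity (n(s₀−p₀)+2k)/2. -/

import Mathlib

open Complex MeasureTheory Filter Topology Polynomial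
open scoped ENNReal Classical

noncomputable section

namespace Nevanlinna

/-- The positive part of the logarithm, `log⁺`. -/
def logp (x : ℝ) : ℝ := max 0 (Real.log x)

/-- `f` is meromorphic on all of `ℂ`. -/
def Mero (f : ℂ → ℂ) : Prop := ∀ z : ℂ, MeromorphicAt f z

/-- `f` is nonconstant. -/
def Nonconst (f : ℂ → ℂ) : Prop := ¬ ∃ c : ℂ, ∀ z, f z = c

/-- The divisor of a meromorphic function: the order of the zero (positive) or pole
(negative) at `z`; junk value `0` at points where `f` is not meromorphic or vanishes
identically near `z`. -/
def div (f : ℂ → ℂ) (z : ℂ) : ℤ :=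
  if h : MeromorphicAt f z then ((meromorphicOrderAt f z).untopD 0) else 0

/-- Multiplicity of `z` as an `a`-point of `f`. -/
def zmult (f : ℂ → ℂ) (a : ℂ) (z : ℂ) : ℕ := (div (fun w => f w - a) z).toNat

/-- Multiplicity of `z` as a pole of `f`. -/
def pmult (f : ℂ → ℂ) (z : ℂ) : ℕ := (-(div f z)).toNat

/-- `z` is a pole of `f`. -/
def IsPole (f : ℂ → ℂ) (z : ℂ) : Prop := div f z < 0

/-- Unintegrated counting function attached to a multiplicity function `m`. -/
def ncnt (m : ℂ → ℕ) (t : ℝ) : ℝ := ∑ᶠ z ∈ {z : ℂ | ‖z‖ ≤ t}, (m z : ℝ)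

/-- Integrated (Nevanlinna) counting function attached to a multiplicity function `m`. -/
def Ncnt (m : ℂ → ℕ) (r : ℝ) : ℝ :=
  (∫ t in (0:ℝ)..r, (ncnt m t - ncnt m 0) / t) + ncnt m 0 * Real.log r

/-- `N(r, a; f)`, counted with multiplicity. -/
def Nzero (f : ℂ → ℂ) (a : ℂ) (r : ℝ) : ℝ := Ncnt (zmult f a) r

/-- `N(r, f) = N(r, ∞; f)`, counted with multiplicity. -/
def Npole (f : ℂ → ℂ) (r : ℝ) : ℝ := Ncnt (pmult f) r

/-- `N̄(r, a; f)`, multiplicities ignored. -/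
def Nzerobar (f : ℂ → ℂ) (a : ℂ) (r : ℝ) : ℝ := Ncnt (fun z => min 1 (zmult f a z)) r

/-- `N̄(r, f)`, multiplicities ignored. -/
def Npolebar (f : ℂ → ℂ) (r : ℝ) : ℝ := Ncnt (fun z => min 1 (pmult f z)) r

/-- The Nevanlinna proximity function `m(r, f)`. -/
def prox (f : ℂ → ℂ) (r : ℝ) : ℝ :=
  (2 * Real.pi)⁻¹ *
    ∫ θ in (0:ℝ)..(2 * Real.pi), logp ‖f (r * Complex.exp (θ * Complex.I))‖

/-- The Nevanlinna characteristic `T(r, f)`. -/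
def T (f : ℂ → ℂ) (r : ℝ) : ℝ := prox f r + Npole f r

/-- The growth exponent `limsup log⁺ N(r) / log r` of a real function. -/
def growthExp (N : ℝ → ℝ) : ℝ≥0∞ :=
  Filter.limsup (fun r => ENNReal.ofReal (logp (N r) / Real.log r)) Filter.atTop

/-- The order `ρ(f)`. -/
def rho (f : ℂ → ℂ) : ℝ≥0∞ := growthExp (T f)

/-- The hyper-order `ρ₂(f)`. -/
def rho2 (f : ℂ → ℂ) : ℝ≥0∞ := growthExp (fun r => logp (T f r))

/-- The lower order `μ(f)`. -/
def mu (f : ℂ → ℂ) : ℝ≥0∞ :=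
  Filter.liminf (fun r => ENNReal.ofReal (logp (T f r) / Real.log r)) Filter.atTop

/-- `ρ₁(0; f)`, the exponent of convergence of the zeros of `f`. -/
def rho1Zero (f : ℂ → ℂ) : ℝ≥0∞ := growthExp (Nzero f 0)

/-- `ρ₁(∞; f)`, the exponent of convergence of the poles of `f`. -/
def rho1Pole (f : ℂ → ℂ) : ℝ≥0∞ := growthExp (Npole f)

/-- `ρ̄₁(0; f)`. -/
def rho1barZero (f : ℂ → ℂ) : ℝ≥0∞ := growthExp (Nzerobar f 0)

/-- `ρ̄₁(∞; f)`. -/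
def rho1barPole (f : ℂ → ℂ) : ℝ≥0∞ := growthExp (Npolebar f)

/-- `N = S(r, f)`: `N(r) = o(T(r, f))` as `r → ∞` outside a set of finite linear measure. -/
def SmallQty (N : ℝ → ℝ) (f : ℂ → ℂ) : Prop :=
  ∃ E : Set ℝ, volume E ≠ ⊤ ∧
    ∀ ε : ℝ, 0 < ε → ∀ᶠ r in atTop, r ∉ E → N r ≤ ε * T f r

/-- `a` is a small function of `f`: `T(r, a) = S(r, f)`. -/
def SmallFn (a f : ℂ → ℂ) : Prop := SmallQty (T a) f

/-- `0` is a Borel exceptional value of `f`. -/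
def BorelZero (f : ℂ → ℂ) : Prop :=
  (0 < rho f ∧ rho1Zero f < rho f) ∨
  (rho f = 0 ∧ (fun r => Nzero f 0 r) =O[atTop] Real.log)

/-- `∞` is a Borel exceptional value of `f`. -/
def BorelPole (f : ℂ → ℂ) : Prop :=
  (0 < rho f ∧ rho1Pole f < rho f) ∨
  (rho f = 0 ∧ (fun r => Npole f r) =O[atTop] Real.log)

/-- A nonzero meromorphic function on `ℂ`. -/
def NonzeroMero (f : ℂ → ℂ) : Prop := Mero f ∧ ∃ z, AnalyticAt ℂ f z ∧ f z ≠ 0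

/-- `f` and `g` have common poles. -/
def CommonPoles (f g : ℂ → ℂ) : Prop := ∀ z, IsPole f z ↔ IsPole g z

/-- `f = 0 ↦ α = 0`: every zero of `f` of multiplicity `p` is a zero of `α` of
multiplicity at least `p`. -/
def ZeroMapsTo (f α : ℂ → ℂ) : Prop := ∀ z, 0 < div f z → div f z ≤ div α z

/-- `f = ∞ ↦ α = ∞`: every pole of `f` of multiplicity `p` is a pole of `α` of
multiplicity at least `p`. -/
def PoleMapsTo (f α : ℂ → ℂ) : Prop := ∀ z, div f z < 0 → div α z ≤ div f z

/-- The differential equation `(fⁿ)⁽ᵏ⁾ (gⁿ)⁽ᵏ⁾ ≡ α²`, as an identity at all points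
where `f` and `g` are analytic. -/
def MainEq (f g α : ℂ → ℂ) (n k : ℕ) : Prop :=
  ∀ z, AnalyticAt ℂ f z → AnalyticAt ℂ g z →
    iteratedDeriv k (fun w => f w ^ n) z * iteratedDeriv k (fun w => g w ^ n) z = α z ^ 2

/-- `f` is a polynomial function. -/
def IsPoly (f : ℂ → ℂ) : Prop := ∃ p : Polynomial ℂ, ∀ z, f z = p.eval z

/-- `f` is a transcendental entire function. -/
def TransEntire (f : ℂ → ℂ) : Prop := Differentiable ℂ f ∧ ¬ IsPoly f

/-- `R` is a (nonzero) rational function of degree `d = deg P − deg Q` for a coprime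
representation `R = P/Q`. -/
def RatWithDeg (R : ℂ → ℂ) (d : ℤ) : Prop :=
  ∃ p q : Polynomial ℂ, p ≠ 0 ∧ q ≠ 0 ∧ IsCoprime p q ∧
    (∀ z, q.eval z ≠ 0 → R z = p.eval z / q.eval z) ∧
    d = (p.natDegree : ℤ) - (q.natDegree : ℤ)

/-- `R` is a nonzero rational function. -/
def IsRat (R : ℂ → ℂ) : Prop := ∃ d : ℤ, RatWithDeg R d

/-- `R` is a rational function (possibly zero). -/
def IsRatFn (R : ℂ → ℂ) : Prop :=
  ∃ p q : Polynomial ℂ, q ≠ 0 ∧ ∀ z, q.eval z ≠ 0 → R z = p.eval z / q.eval z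

end Nevanlinna

/-!
Near `z₀` the function `fⁿ` has a zero of order `n p₀ > k` and `gⁿ` a pole of order `n s₀`, so
differentiating `k` times lowers both orders by exactly `k`: the left side of the equation has
order `(n p₀ - k) - (n s₀ + k)`, which must be twice the order of `α`. The two equal-order cases
are excluded because `n (p₀ - s₀) = 2k` is impossible for `0 < 2k < n`.
-/

section IteratedDeriv

variable {𝕜 E : Type*} [NontriviallyNormedField 𝕜]
  [NormedAddCommGroup E] [NormedSpace 𝕜 E] [CompleteSpace E]

theorem MeromorphicAt.iteratedDeriv {f : 𝕜 → E} {x : 𝕜} (hf : MeromorphicAt f x) (k : ℕ) :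
    MeromorphicAt (iteratedDeriv k f) x := by
  induction k with
  | zero => simpa using hf
  | succ j ih => simpa only [iteratedDeriv_succ] using ih.deriv

variable [CharZero 𝕜]

/-- The hypothesis keeps every intermediate order away from `0`, where differentiation would
not lower the order by one. -/
theorem meromorphicOrderAt_iteratedDeriv {f : 𝕜 → E} {x : 𝕜} {m : ℤ} {k : ℕ}
    (hmk : (k : ℤ) ≤ m ∨ m < 0) (hf : meromorphicOrderAt f x = m) :
    meromorphicOrderAt (iteratedDeriv k f) x = ↑(m - k) := by
  induction k with
  | zero => simpa using hf
  | succ j ih =>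
    have hj : (j : ℤ) ≤ m ∨ m < 0 := by omega
    have hmj : ((m - j : ℤ) : 𝕜) ≠ 0 := by exact_mod_cast (by omega : m - j ≠ 0)
    rw [iteratedDeriv_succ, meromorphicOrderAt_deriv_eq_sub_one hmj (ih hj)]
    congr 1
    omega

theorem meromorphicOrderAt_iteratedDeriv_pow [CompleteSpace 𝕜] {f : 𝕜 → 𝕜} {x : 𝕜} {a : ℤ}
    {n k : ℕ} (hf : MeromorphicAt f x) (ha : meromorphicOrderAt f x = a)
    (hnak : (k : ℤ) ≤ n * a ∨ n * a < 0) :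
    meromorphicOrderAt (iteratedDeriv k fun w => f w ^ n) x = ↑(n * a - k) := by
  refine meromorphicOrderAt_iteratedDeriv hnak ?_
  rw [show (fun w => f w ^ n) = f ^ n from rfl, meromorphicOrderAt_pow hf, ha]
  rfl

end IteratedDeriv

namespace Nevanlinna

theorem meromorphicOrderAt_eq_of_div_eq {f : ℂ → ℂ} {z : ℂ} {m : ℤ} (hf : MeromorphicAt f z)
    (hm : m ≠ 0) (h : div f z = m) : meromorphicOrderAt f z = m := by
  rw [div, dif_pos hf] at h
  cases ho : meromorphicOrderAt f z with
  | top => simp [ho] at h; omega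
  | coe a => simp_all

theorem div_eq_of_meromorphicOrderAt_eq {f : ℂ → ℂ} {z : ℂ} {m : ℤ} (hf : MeromorphicAt f z)
    (h : meromorphicOrderAt f z = m) : div f z = m := by
  rw [div, dif_pos hf, h]
  rfl

theorem MainEq.two_mul_div_eq {f g α : ℂ → ℂ} {n k : ℕ} {z : ℂ} {a b : ℤ}
    (heq : MainEq f g α n k) (hf : MeromorphicAt f z) (hg : MeromorphicAt g z)
    (hα : MeromorphicAt α z) (ha : meromorphicOrderAt f z = a)
    (hb : meromorphicOrderAt g z = b) (hnak : (k : ℤ) ≤ n * a ∨ n * a < 0)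
    (hnbk : (k : ℤ) ≤ n * b ∨ n * b < 0) :
    2 * div α z = (n * a - k) + (n * b - k) := by
  have hF := meromorphicOrderAt_iteratedDeriv_pow hf ha hnak
  have hG := meromorphicOrderAt_iteratedDeriv_pow hg hb hnbk
  have hlocal : (fun w => iteratedDeriv k (fun w => f w ^ n) w *
      iteratedDeriv k (fun w => g w ^ n) w) =ᶠ[𝓝[≠] z] fun w => α w ^ 2 := by
    filter_upwards [hf.eventually_analyticAt, hg.eventually_analyticAt] with w hfw hgw
    exact heq w hfw hgw
  have hprod : meromorphicOrderAt (fun w => α w ^ 2) z = ↑((n * a - k) + (n * b - k)) := by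
    rw [← meromorphicOrderAt_congr hlocal]
    refine (meromorphicOrderAt_mul ((hf.fun_pow n).iteratedDeriv k)
      ((hg.fun_pow n).iteratedDeriv k)).trans ?_
    rw [hF, hG]
    rfl
  have hsq : meromorphicOrderAt (fun w => α w ^ 2) z = ((2 : ℕ) : WithTop ℤ) * meromorphicOrderAt α z :=
    meromorphicOrderAt_pow hα
  obtain ⟨c, hc⟩ : ∃ c : ℤ, meromorphicOrderAt α z = c := by
    cases h : meromorphicOrderAt α z with
    | top =>
      rw [hprod, h] at hsq
      exact (WithTop.coe_ne_top (hsq.trans (WithTop.mul_top (by norm_num)))).elim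
    | coe c => exact ⟨c, rfl⟩
  rw [div_eq_of_meromorphicOrderAt_eq hα hc]
  rw [hprod, hc] at hsq
  rw [show ((2 : ℕ) : WithTop ℤ) * c = ((2 * c : ℤ) : WithTop ℤ) by norm_cast] at hsq
  exact (WithTop.coe_injective hsq).symm

theorem stmt13_general (f g α : ℂ → ℂ) (k n : ℕ) (z₀ : ℂ) (p₀ s₀ : ℕ)
    (hk : 0 < k) (hn : 2 * k < n)
    (hf : Mero f) (hg : Mero g)
    (hα : NonzeroMero α)
    (heq : MainEq f g α n k)
    (hp₀ : 0 < p₀) (hs₀ : 0 < s₀)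
    (hzf : div f z₀ = (p₀ : ℤ)) (hpg : div g z₀ = -(s₀ : ℤ)) :
    ((n : ℤ) * p₀ - k ≠ (n : ℤ) * s₀ + k) ∧
    ((n : ℤ) * p₀ - k > (n : ℤ) * s₀ + k →
      0 < div α z₀ ∧ 2 * div α z₀ = (n : ℤ) * ((p₀ : ℤ) - s₀) - 2 * k) ∧
    ((n : ℤ) * p₀ - k < (n : ℤ) * s₀ + k →
      (p₀ : ℤ) ≤ s₀ ∧ div α z₀ < 0 ∧
        2 * (-div α z₀) = (n : ℤ) * ((s₀ : ℤ) - p₀) + 2 * k) := by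
  have hfo := meromorphicOrderAt_eq_of_div_eq (hf z₀) (by omega) hzf
  have hgo := meromorphicOrderAt_eq_of_div_eq (hg z₀) (by omega) hpg
  have hα₀ := heq.two_mul_div_eq (hf z₀) (hg z₀) (hα.1 z₀) hfo hgo
    (Or.inl (by nlinarith)) (Or.inr (by nlinarith))
  have hne : (n : ℤ) * (p₀ - s₀) ≠ 2 * k := by
    rcases le_or_gt (p₀ : ℤ) s₀ with hle | hlt <;> nlinarith
  refine ⟨fun h => hne (by linarith), fun h => ⟨by linarith, by linarith⟩,
    fun h => ⟨?_, by linarith, by linarith⟩⟩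
  by_contra! hps
  nlinarith

/-- Local analysis at a point which is a zero of `f` and a pole of `g`. -/
theorem stmt13 (f g α : ℂ → ℂ) (k n : ℕ) (z₀ : ℂ) (p₀ s₀ : ℕ)
    (hk : 0 < k) (hn : 2 * k < n)
    (hf : Mero f) (hg : Mero g) (hfnc : Nonconst f) (hgnc : Nonconst g)
    (hα : NonzeroMero α)
    (heq : MainEq f g α n k)
    (hp₀ : 0 < p₀) (hs₀ : 0 < s₀)
    (hzf : div f z₀ = (p₀ : ℤ)) (hpg : div g z₀ = -(s₀ : ℤ)) :
    ((n : ℤ) * p₀ - k ≠ (n : ℤ) * s₀ + k) ∧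
    ((n : ℤ) * p₀ - k > (n : ℤ) * s₀ + k →
      0 < div α z₀ ∧ 2 * div α z₀ = (n : ℤ) * ((p₀ : ℤ) - s₀) - 2 * k) ∧
    ((n : ℤ) * p₀ - k < (n : ℤ) * s₀ + k →
      (p₀ : ℤ) ≤ s₀ ∧ div α z₀ < 0 ∧
        2 * (-div α z₀) = (n : ℤ) * ((s₀ : ℤ) - p₀) + 2 * k) :=
  stmt13_general f g α k n z₀ p₀ s₀ hk hn hf hg hα heq hp₀ hs₀ hzf hpg

end Nevanlinna
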